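/- arXiv:1212.6240 — 3 statements merged into one kernel-verified Lean document; each statement's English description precedes it below -/
import Mathlib

section
/- The rational R-matrix R(u) = (u·Id − h·P)/(u − h) satisfies the Yang–Baxter equation R^{(12)}(u−v) R^{(13)}(u) R^{(23)}(v) = R^{(23)}(v) R^{(13)}(u) R^{(12)}(u−v) as operators on C^N ⊗ C^N ⊗ C^N, for all u, v for which the expressions are defined. -/
/- ℂ^N ⊗ ℂ^N ⊗ ℂ^N modeled as functions (Fin N × Fin N × Fin N) → ℂ.
   Index swaps giving the permutation operators in factors (1,2), (1,3), (2,3). -/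
def sw12 (N : ℕ) : Fin N × Fin N × Fin N → Fin N × Fin N × Fin N :=
  fun p => (p.2.1, p.1, p.2.2)

def sw13 (N : ℕ) : Fin N × Fin N × Fin N → Fin N × Fin N × Fin N :=
  fun p => (p.2.2, p.2.1, p.1)

def sw23 (N : ℕ) : Fin N × Fin N × Fin N → Fin N × Fin N × Fin N :=
  fun p => (p.1, p.2.2, p.2.1)

/- R(u) = (u·Id − h·P)/(u−h) acting in the pair of tensor factors specified by the swap s. -/
noncomputable def Rop (N : ℕ) (h u : ℂ)
    (s : Fin N × Fin N × Fin N → Fin N × Fin N × Fin N) :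
    ((Fin N × Fin N × Fin N) → ℂ) →ₗ[ℂ] ((Fin N × Fin N × Fin N) → ℂ) :=
  (u - h)⁻¹ • (u • (LinearMap.id :
      ((Fin N × Fin N × Fin N) → ℂ) →ₗ[ℂ] ((Fin N × Fin N × Fin N) → ℂ))
    - h • LinearMap.funLeft ℂ ℂ s)

/-! Each operator is a scalar times `u • 1 - h • P`, and the scalars commute past everything, so
it suffices to prove the Yang–Baxter equation for `u • 1 - h • P` (a polynomial identity that
holds for all `u`, `v`, `h`; if a denominator vanishes both sides are `0`). Expanding the two
triple products, the terms of degree 0, 1 and 3 in `h` agree (the last by the braid relation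
`P₁₂P₁₃P₂₃ = P₂₃P₁₃P₁₂`), and in degree 2 both sides are a combination of the two 3-cycles
whose coefficients agree exactly because the spectral parameters satisfy `u = (u - v) + v`. -/

section YangBaxter

variable {R A : Type*} [CommRing R] [Ring A] [Algebra R A]

theorem smul_one_sub_smul_mul_mul_expand (h a b c : R) (p q r : A) :
    (a • 1 - h • p) * (b • 1 - h • q) * (c • 1 - h • r)
      = (a * b * c) • 1 - h • ((b * c) • p + (a * c) • q + (a * b) • r)
        + h ^ 2 • (c • (p * q) + b • (p * r) + a • (q * r)) - h ^ 3 • (p * q * r) := by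
  simp only [mul_sub, sub_mul, one_mul, mul_one, mul_smul_comm, smul_mul_assoc]
  module

/-- The hypotheses are the relations of the transpositions `(12)`, `(13)`, `(23)` of `S₃`:
`pq = qr = rp` and `qp = pr = rq` are the two 3-cycles. -/
theorem yangBaxter_of_transposition_relations (h a c : R) {p q r : A}
    (hpq : p * q = q * r) (hrp : r * p = q * r) (hqp : q * p = p * r) (hrq : r * q = p * r)
    (hpqr : p * q * r = r * q * p) :
    (a • 1 - h • p) * ((a + c) • 1 - h • q) * (c • 1 - h • r)
      = (c • 1 - h • r) * ((a + c) • 1 - h • q) * (a • 1 - h • p) := by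
  rw [smul_one_sub_smul_mul_mul_expand, smul_one_sub_smul_mul_mul_expand, hpqr, hpq, hrp, hqp, hrq]
  module

end YangBaxter

section Transpositions

variable (N : ℕ)

local notation "P" s => (LinearMap.funLeft ℂ ℂ s : Module.End ℂ ((Fin N × Fin N × Fin N) → ℂ))

theorem funLeft_swap_relations :
    ((P sw12 N) * (P sw13 N) = (P sw13 N) * (P sw23 N)) ∧
    ((P sw23 N) * (P sw12 N) = (P sw13 N) * (P sw23 N)) ∧
    ((P sw13 N) * (P sw12 N) = (P sw12 N) * (P sw23 N)) ∧
    ((P sw23 N) * (P sw13 N) = (P sw12 N) * (P sw23 N)) ∧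
    ((P sw12 N) * (P sw13 N) * (P sw23 N) = (P sw23 N) * (P sw13 N) * (P sw12 N)) := by
  refine ⟨?_, ?_, ?_, ?_, ?_⟩ <;> rfl

end Transpositions

theorem stmt_1_general (N : ℕ) (h u v : ℂ) :
    Rop N h (u - v) (sw12 N) ∘ₗ Rop N h u (sw13 N) ∘ₗ Rop N h v (sw23 N)
      = Rop N h v (sw23 N) ∘ₗ Rop N h u (sw13 N) ∘ₗ Rop N h (u - v) (sw12 N) := by
  obtain ⟨hpq, hrp, hqp, hrq, hpqr⟩ := funLeft_swap_relations N
  have key := yangBaxter_of_transposition_relations h (u - v) v hpq hrp hqp hrq hpqr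
  simp only [sub_add_cancel] at key
  simp only [Rop, ← Module.End.mul_eq_comp, ← mul_assoc, smul_mul_smul_comm, ← Module.End.one_eq_id]
  rw [key]
  congr 1
  ring

theorem stmt_1 (N : ℕ) (h u v : ℂ) (h1 : u - v ≠ h) (h2 : u ≠ h) (h3 : v ≠ h) :
    Rop N h (u - v) (sw12 N) ∘ₗ Rop N h u (sw13 N) ∘ₗ Rop N h v (sw23 N)
      = Rop N h v (sw23 N) ∘ₗ Rop N h u (sw13 N) ∘ₗ Rop N h (u - v) (sw12 N) :=
  stmt_1_general N h u v
end

section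
/- The operators s̃_i, i = 1,…,n−1, acting on (C^N)^{⊗n}-valued functions of z_1,…,z_n,h by (s̃_i f)(z_1,…,z_n,h) = [((z_i − z_{i+1})·P^{(i,i+1)} + h)/(z_i − z_{i+1} + h)] · f(z_1,…,z_{i+1},z_i,…,z_n,h), satisfy the braid and involution relations of the symmetric group: s̃_i² = Id, s̃_i s̃_j = s̃_j s̃_i for |i−j| ≥ 2, and s̃_i s̃_{i+1} s̃_i = s̃_{i+1} s̃_i s̃_{i+1}; hence the assignment s_i ↦ s̃_i defines an action of S_n. -/
/-!
Each `s̃_i` is the variable swap `σ = (i i+1)` followed by multiplication by the rational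
R-matrix `R(u) = (u P + h)/(u + h)` at `u = z_i - z_{i+1}`. Expanding a word in the `s̃`'s
pointwise, the permutations of the variables and of the tensor indices compose as in `S_n`,
so each relation reduces to the corresponding relation among transpositions together with a
scalar rational identity: unitarity `R(u) R(-u) = 1` for `s̃_i² = Id`, and the Yang–Baxter
equation for `R` for the braid relation.
-/

/- Domain: points (z_1,…,z_n) with z_i − z_j + h ≠ 0 for all i ≠ j
   (off the singularities of the operators s̃_i). -/
def Zdom (n : ℕ) (h : ℂ) := {z : Fin n → ℂ // ∀ i j : Fin n, i ≠ j → z i - z j + h ≠ 0}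

/- Permuting the variables z by a permutation s preserves the domain. -/
def permZ {n : ℕ} {h : ℂ} (s : Equiv.Perm (Fin n)) (z : Zdom n h) : Zdom n h :=
  ⟨fun i => z.1 (s i), fun i j hij => z.2 (s i) (s j) (fun e => hij (s.injective e))⟩

/- The permutation operator P^{(i,j)} on (ℂ^N)^{⊗n}, modeled as functions
   (Fin n → Fin N) → ℂ. -/
noncomputable def Pop (N n : ℕ) (i j : Fin n) :
    ((Fin n → Fin N) → ℂ) →ₗ[ℂ] ((Fin n → Fin N) → ℂ) :=
  LinearMap.funLeft ℂ ℂ (fun m => m ∘ Equiv.swap i j)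

/- (s̃ f)(z) = [((z_i − z_j)·P^{(i,j)} + h)/(z_i − z_j + h)] · f(z with z_i, z_j swapped). -/
noncomputable def stilde (N n : ℕ) (h : ℂ) (i j : Fin n) :
    (Zdom n h → (Fin n → Fin N) → ℂ) → (Zdom n h → (Fin n → Fin N) → ℂ) :=
  fun f z =>
    (z.1 i - z.1 j + h)⁻¹ •
      ((z.1 i - z.1 j) • Pop N n i j (f (permZ (Equiv.swap i j) z))
        + h • f (permZ (Equiv.swap i j) z))

open Equiv

lemma stilde_apply (N n : ℕ) (h : ℂ) (i j : Fin n)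
    (f : Zdom n h → (Fin n → Fin N) → ℂ) (z : Zdom n h) (m : Fin n → Fin N) :
    stilde N n h i j f z m =
      (z.1 i - z.1 j + h)⁻¹ *
        ((z.1 i - z.1 j) * f (permZ (swap i j) z) (m ∘ swap i j)
          + h * f (permZ (swap i j) z) m) := by
  simp only [stilde, Pop, LinearMap.funLeft_apply, Pi.smul_apply, Pi.add_apply, smul_eq_mul]

section permZ

variable {n : ℕ} {h : ℂ}

@[simp]
lemma permZ_val (σ : Perm (Fin n)) (z : Zdom n h) (k : Fin n) :
    (permZ σ z).1 k = z.1 (σ k) := rfl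

@[simp]
lemma permZ_one (z : Zdom n h) : permZ 1 z = z := rfl

@[simp]
lemma permZ_permZ (σ τ : Perm (Fin n)) (z : Zdom n h) :
    permZ σ (permZ τ z) = permZ (τ * σ) z := rfl

end permZ

section swap

variable {α : Type*} [DecidableEq α]

lemma swap_mul_swap_comm {i j k l : α}
    (hik : i ≠ k) (hil : i ≠ l) (hjk : j ≠ k) (hjl : j ≠ l) :
    swap i j * swap k l = swap k l * swap i j := by
  ext x
  simp only [Perm.coe_mul, Function.comp_apply, swap_apply_def]
  split_ifs <;> simp_all

lemma swap_mul_swap_mul_swap_left {p q r : α}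
    (hqr : q ≠ r) (hpr : p ≠ r) :
    swap p q * swap q r * swap p q = swap p r := by
  rw [swap_comm p q, swap_comm q r]
  exact swap_mul_swap_mul_swap hqr.symm hpr.symm

lemma swap_mul_swap_mul_swap_right {p q r : α}
    (hpq : p ≠ q) (hpr : p ≠ r) :
    swap q r * swap p q * swap q r = swap p r :=
  (swap_mul_swap_mul_swap hpq hpr).trans (swap_comm r p)

end swap

section relations

variable (N n : ℕ) (h : ℂ)

lemma stilde_stilde_self {i j : Fin n} (hij : i ≠ j)
    (f : Zdom n h → (Fin n → Fin N) → ℂ) :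
    stilde N n h i j (stilde N n h i j f) = f := by
  funext z m
  have h₁ : z.1 i - z.1 j + h ≠ 0 := z.2 i j hij
  have h₂ : z.1 j - z.1 i + h ≠ 0 := z.2 j i hij.symm
  simp only [stilde_apply, permZ_permZ, Function.comp_assoc, ← Perm.coe_mul, permZ_val,
    swap_apply_left, swap_apply_right, swap_mul_self, permZ_one, Perm.coe_one, Function.comp_id]
  field_simp
  ring

lemma stilde_comm {i j k l : Fin n} (hij : i ≠ j) (hkl : k ≠ l)
    (hik : i ≠ k) (hil : i ≠ l) (hjk : j ≠ k) (hjl : j ≠ l)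
    (f : Zdom n h → (Fin n → Fin N) → ℂ) :
    stilde N n h i j (stilde N n h k l f) = stilde N n h k l (stilde N n h i j f) := by
  funext z m
  have h₁ : z.1 i - z.1 j + h ≠ 0 := z.2 i j hij
  have h₂ : z.1 k - z.1 l + h ≠ 0 := z.2 k l hkl
  simp only [stilde_apply, permZ_permZ, Function.comp_assoc, ← Perm.coe_mul, permZ_val,
    swap_apply_of_ne_of_ne hik.symm hjk.symm, swap_apply_of_ne_of_ne hil.symm hjl.symm,
    swap_apply_of_ne_of_ne hik hil, swap_apply_of_ne_of_ne hjk hjl,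
    swap_mul_swap_comm hik hil hjk hjl]
  field_simp
  ring

lemma stilde_braid {p q r : Fin n} (hpq : p ≠ q) (hqr : q ≠ r) (hpr : p ≠ r)
    (f : Zdom n h → (Fin n → Fin N) → ℂ) :
    stilde N n h p q (stilde N n h q r (stilde N n h p q f))
      = stilde N n h q r (stilde N n h p q (stilde N n h q r f)) := by
  funext z m
  have h₁ : z.1 p - z.1 q + h ≠ 0 := z.2 p q hpq
  have h₂ : z.1 q - z.1 r + h ≠ 0 := z.2 q r hqr
  have h₃ : z.1 p - z.1 r + h ≠ 0 := z.2 p r hpr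
  simp only [stilde_apply, permZ_permZ, Function.comp_assoc, ← Perm.coe_mul, permZ_val,
    Perm.mul_apply, ← mul_assoc, swap_mul_swap_mul_swap_left hqr hpr,
    swap_mul_swap_mul_swap_right hpq hpr, swap_mul_self, Perm.coe_one, Function.comp_id,
    swap_apply_left, swap_apply_right, swap_apply_of_ne_of_ne hpq hpr,
    swap_apply_of_ne_of_ne hpr.symm hqr.symm]
  field_simp
  ring

end relations

theorem stmt_3 (N n : ℕ) (h : ℂ) :
    (∀ (i : ℕ) (hi : i + 1 < n) (f : Zdom n h → (Fin n → Fin N) → ℂ),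
      stilde N n h ⟨i, by omega⟩ ⟨i + 1, hi⟩ (stilde N n h ⟨i, by omega⟩ ⟨i + 1, hi⟩ f) = f) ∧
    (∀ (i j : ℕ) (hi : i + 1 < n) (hj : j + 1 < n), (i + 2 ≤ j ∨ j + 2 ≤ i) →
      ∀ f : Zdom n h → (Fin n → Fin N) → ℂ,
        stilde N n h ⟨i, by omega⟩ ⟨i + 1, hi⟩ (stilde N n h ⟨j, by omega⟩ ⟨j + 1, hj⟩ f)
          = stilde N n h ⟨j, by omega⟩ ⟨j + 1, hj⟩
              (stilde N n h ⟨i, by omega⟩ ⟨i + 1, hi⟩ f)) ∧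
    (∀ (i : ℕ) (hi : i + 2 < n) (f : Zdom n h → (Fin n → Fin N) → ℂ),
      stilde N n h ⟨i, by omega⟩ ⟨i + 1, by omega⟩
          (stilde N n h ⟨i + 1, by omega⟩ ⟨i + 2, hi⟩
            (stilde N n h ⟨i, by omega⟩ ⟨i + 1, by omega⟩ f))
        = stilde N n h ⟨i + 1, by omega⟩ ⟨i + 2, hi⟩
            (stilde N n h ⟨i, by omega⟩ ⟨i + 1, by omega⟩
              (stilde N n h ⟨i + 1, by omega⟩ ⟨i + 2, hi⟩ f))) := by
  refine ⟨fun i hi f => stilde_stilde_self N n h ?_ f,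
    fun i j hi hj hij f => stilde_comm N n h ?_ ?_ ?_ ?_ ?_ ?_ f,
    fun i hi f => stilde_braid N n h ?_ ?_ ?_ f⟩
  all_goals simp only [ne_eq, Fin.mk.injEq]; omega
end

section
/- The maximal value of ℓ_{σ,I} over I ∈ 𝓘_λ equals dim F_λ = Σ_{1≤i<j≤N} λ_i λ_j, and for fixed σ it is attained at exactly one partition I, namely the one given by I_a = σ({n − λ^{(a)} + 1, …, n − λ^{(a−1)}}), where λ^{(a)} = λ_1+⋯+λ_a and λ^{(0)} = 0. -/
/- I ∈ 𝓘_λ: an ordered set-partition I = (I_1,…,I_N) of {1,…,n} with |I_a| = λ_a. -/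
def IsPart {N n : ℕ} (lam : Fin N → ℕ) (I : Fin N → Finset (Fin n)) : Prop :=
  (∀ a, (I a).card = lam a) ∧ (∀ a b, a ≠ b → Disjoint (I a) (I b)) ∧
    Finset.univ.biUnion I = Finset.univ

/- ℓ_{σ,I} = #{(i,j) : σ(i) ∈ I_a, σ(j) ∈ I_b, a < b, i > j}. -/
def ell {N n : ℕ} (σ : Equiv.Perm (Fin n)) (I : Fin N → Finset (Fin n)) : ℕ :=
  (Finset.univ.filter (fun p : Fin n × Fin n =>
    p.2 < p.1 ∧ ∃ a b : Fin N, a < b ∧ σ p.1 ∈ I a ∧ σ p.2 ∈ I b)).card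

/- The unique maximizer: I_a = σ({n − λ^{(a)} + 1, …, n − λ^{(a−1)}})
   (0-based: positions x with n − λ^{(a)} ≤ x < n − λ^{(a−1)}). -/
def Imax {N : ℕ} (n : ℕ) (lam : Fin N → ℕ) (σ : Equiv.Perm (Fin n)) :
    Fin N → Finset (Fin n) :=
  fun a => (Finset.univ.filter (fun x : Fin n =>
    n - (∑ b ∈ Finset.univ.filter (fun b => b ≤ a), lam b) ≤ x.1 ∧
      x.1 < n - (∑ b ∈ Finset.univ.filter (fun b => b < a), lam b))).image (fun x => σ x)

namespace Stmt15Aux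

open Finset

variable {N n : ℕ}

def fibr (f : Fin n → Fin N) (a : Fin N) : Finset (Fin n) :=
  univ.filter (fun i => f i = a)

def invc (f : Fin n → Fin N) : ℕ :=
  (univ.filter (fun p : Fin n × Fin n => p.2 < p.1 ∧ f p.1 < f p.2)).card

def coinv (f : Fin n → Fin N) : ℕ :=
  (univ.filter (fun p : Fin n × Fin n => p.1 < p.2 ∧ f p.1 < f p.2)).card

lemma total_count (f : Fin n → Fin N) :
    (univ.filter (fun p : Fin n × Fin n => f p.1 < f p.2)).card
      = ∑ q ∈ univ.filter (fun q : Fin N × Fin N => q.1 < q.2),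
          (fibr f q.1).card * (fibr f q.2).card := by
  have h1 : univ.filter (fun p : Fin n × Fin n => f p.1 < f p.2)
      = (univ.filter (fun q : Fin N × Fin N => q.1 < q.2)).biUnion
          (fun q => (fibr f q.1) ×ˢ (fibr f q.2)) := by
    ext p
    simp only [mem_filter, mem_univ, true_and, mem_biUnion, mem_product, fibr]
    constructor
    · intro h; exact ⟨⟨f p.1, f p.2⟩, h, rfl, rfl⟩
    · rintro ⟨q, hq, h1, h2⟩; rw [h1, h2]; exact hq
  rw [h1, card_biUnion]
  · exact Finset.sum_congr rfl (fun q _ => card_product _ _)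
  · intro q hq q' hq' hne
    rw [Function.onFun, Finset.disjoint_left]
    rintro p hp hp'
    simp only [mem_product, fibr, mem_filter, mem_univ, true_and] at hp hp'
    exact hne (Prod.ext (hp.1.symm.trans hp'.1) (hp.2.symm.trans hp'.2))

lemma split_count (f : Fin n → Fin N) :
    invc f + coinv f
      = (univ.filter (fun p : Fin n × Fin n => f p.1 < f p.2)).card := by
  rw [invc, coinv, ← card_union_of_disjoint]
  · congr 1
    ext p
    simp only [mem_union, mem_filter, mem_univ, true_and]
    constructor
    · rintro (⟨_, h⟩ | ⟨_, h⟩) <;> exact h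
    · intro h
      rcases lt_trichotomy p.1 p.2 with h' | h' | h'
      · exact Or.inr ⟨h', h⟩
      · exfalso; rw [h'] at h; exact lt_irrefl _ h
      · exact Or.inl ⟨h', h⟩
  · rw [Finset.disjoint_left]
    rintro p hp hp'
    simp only [mem_filter, mem_univ, true_and] at hp hp'
    exact absurd hp'.1 (not_lt.2 hp.1.le)

lemma coinv_zero_iff (f : Fin n → Fin N) : coinv f = 0 ↔ Antitone f := by
  rw [coinv, Finset.card_eq_zero, Finset.filter_eq_empty_iff, antitone_iff_forall_lt]
  constructor
  · intro h i j hij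
    have := h (mem_univ (i, j))
    simp only [not_and] at this
    exact not_lt.1 (this hij)
  · intro h p _
    simp only [not_and]
    intro hp
    exact not_lt.2 (h hp)

lemma thresh (f : Fin n → Fin N) (hf : Antitone f) (a : Fin N) (i : Fin n) :
    a ≤ f i ↔ i.1 < (univ.filter (fun j => a ≤ f j)).card := by
  constructor
  · intro h
    have hsub : (univ.filter (fun j : Fin n => j ≤ i)) ⊆ univ.filter (fun j => a ≤ f j) := by
      intro j hj
      simp only [mem_filter, mem_univ, true_and] at hj ⊢
      exact le_trans h (hf hj)
    have hc : (univ.filter (fun j : Fin n => j ≤ i)) = Finset.Iic i := by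
      ext j; simp
    have := Finset.card_le_card hsub
    rw [hc, Fin.card_Iic] at this
    omega
  · intro h
    by_contra hne
    have hlt : f i < a := not_le.1 hne
    have hsub : (univ.filter (fun j : Fin n => a ≤ f j)) ⊆ univ.filter (fun j => j < i) := by
      intro j hj
      simp only [mem_filter, mem_univ, true_and] at hj ⊢
      by_contra hji
      exact absurd (le_trans hj (hf (not_lt.1 hji))) (not_le.2 hlt)
    have hc : (univ.filter (fun j : Fin n => j < i)) = Finset.Iio i := by
      ext j; simp
    have := Finset.card_le_card hsub
    rw [hc, Fin.card_Iio] at this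
    omega

lemma card_ge_filter (f : Fin n → Fin N) (a : Fin N) :
    (univ.filter (fun j => a ≤ f j)).card
      = ∑ b ∈ univ.filter (fun b => a ≤ b), (fibr f b).card := by
  rw [Finset.card_eq_sum_card_fiberwise
    (f := f) (t := univ.filter (fun b => a ≤ b))
    (fun x hx => by simpa using hx)]
  refine Finset.sum_congr rfl (fun b hb => ?_)
  simp only [mem_filter, mem_univ, true_and] at hb
  congr 1
  ext j
  simp only [mem_filter, mem_univ, true_and, fibr]
  constructor
  · rintro ⟨_, h⟩; exact h
  · intro h; exact ⟨h ▸ hb, h⟩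

lemma antitone_eq (f g : Fin n → Fin N) (hf : Antitone f) (hg : Antitone g)
    (h : ∀ a, (fibr f a).card = (fibr g a).card) : f = g := by
  have key : ∀ (i : Fin n) (a : Fin N), a ≤ f i ↔ a ≤ g i := by
    intro i a
    rw [thresh f hf, thresh g hg, card_ge_filter, card_ge_filter]
    rw [Finset.sum_congr rfl fun b _ => h b]
  funext i
  exact le_antisymm ((key i (f i)).1 le_rfl) ((key i (g i)).2 le_rfl)

def Acap (lam : Fin N → ℕ) (a : Fin N) : ℕ := ∑ b ∈ univ.filter (fun b => b ≤ a), lam b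
def Bcap (lam : Fin N → ℕ) (a : Fin N) : ℕ := ∑ b ∈ univ.filter (fun b => b < a), lam b

def Sset (n : ℕ) (lam : Fin N → ℕ) (a : Fin N) : Finset (Fin n) :=
  univ.filter (fun x : Fin n => n - Acap lam a ≤ x.1 ∧ x.1 < n - Bcap lam a)

lemma hBA (lam : Fin N → ℕ) (a : Fin N) : Bcap lam a + lam a = Acap lam a := by
  have h : univ.filter (fun b => b ≤ a) = insert a (univ.filter (fun b => b < a)) := by
    ext b
    simp only [mem_filter, mem_univ, true_and, mem_insert]
    constructor
    · intro h; exact eq_or_lt_of_le h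
    · rintro (h | h)
      · exact h.le
      · exact h.le
  rw [Acap, h, Finset.sum_insert (by simp), Bcap, add_comm]

lemma hAn (lam : Fin N → ℕ) (a : Fin N) (hn : ∑ a, lam a = n) : Acap lam a ≤ n := by
  rw [← hn, Acap]
  exact Finset.sum_le_sum_of_subset (Finset.subset_univ _)

lemma hAB (lam : Fin N → ℕ) {a b : Fin N} (hab : a < b) : Acap lam a ≤ Bcap lam b := by
  apply Finset.sum_le_sum_of_subset
  intro x hx
  simp only [mem_filter, mem_univ, true_and] at hx ⊢
  exact lt_of_le_of_lt hx hab

lemma card_Sset (lam : Fin N → ℕ) (hn : ∑ a, lam a = n) (a : Fin N) :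
    (Sset n lam a).card = lam a := by
  have h1 : Acap lam a ≤ n := hAn lam a hn
  have h2 : Bcap lam a + lam a = Acap lam a := hBA lam a
  have h3 : Sset n lam a = (Finset.Ico (n - Acap lam a) (n - Bcap lam a)).attachFin
      (fun m hm => by rw [Finset.mem_Ico] at hm; omega) := by
    ext x
    simp [Sset, Finset.mem_attachFin, Finset.mem_Ico]
  rw [h3, Finset.card_attachFin, Nat.card_Ico]
  omega

lemma disj_Sset (lam : Fin N → ℕ) {a b : Fin N} (hab : a ≠ b) :
    Disjoint (Sset n lam a) (Sset n lam b) := by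
  wlog h : a < b generalizing a b
  · exact (this hab.symm ((lt_or_gt_of_ne hab).resolve_left h)).symm
  have hA : Acap lam a ≤ Bcap lam b := hAB lam h
  rw [Finset.disjoint_left]
  intro x hx hx'
  simp only [Sset, mem_filter, mem_univ, true_and] at hx hx'
  omega

lemma main_part (lam : Fin N → ℕ) (I : Fin N → Finset (Fin n)) (hI : IsPart lam I)
    (σ : Equiv.Perm (Fin n)) :
    ∃ f : Fin n → Fin N,
      (∀ a, I a = (fibr f a).image (fun x => σ x)) ∧
      (∀ a, (fibr f a).card = lam a) ∧
      ell σ I = invc f := by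
  obtain ⟨hcard, hdisj, hcov⟩ := hI
  have hex : ∀ x : Fin n, ∃ a, σ x ∈ I a := by
    intro x
    have : σ x ∈ Finset.univ.biUnion I := by rw [hcov]; exact mem_univ _
    simpa [mem_biUnion] using this
  choose f hf using hex
  have huniq : ∀ (x : Fin n) (a : Fin N), σ x ∈ I a ↔ f x = a := by
    intro x a
    constructor
    · intro h
      by_contra hne
      exact (Finset.disjoint_left.1 (hdisj _ _ hne) (hf x)) h
    · rintro rfl; exact hf x
  have himg : ∀ a, I a = (fibr f a).image (fun x => σ x) := by
    intro a
    ext y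
    simp only [Finset.mem_image, fibr, mem_filter, mem_univ, true_and]
    constructor
    · intro hy
      exact ⟨σ.symm y, (huniq _ a).1 (by simpa using hy), by simp⟩
    · rintro ⟨x, hx, rfl⟩
      exact (huniq x a).2 hx
  refine ⟨f, himg, ?_, ?_⟩
  · intro a
    rw [← hcard a, himg a, Finset.card_image_of_injective _ σ.injective]
  · rw [ell, invc]
    congr 1
    apply Finset.filter_congr
    intro p _
    refine and_congr_right (fun _ => ?_)
    constructor
    · rintro ⟨a, b, hab, h1, h2⟩
      rw [(huniq p.1 a).1 h1, (huniq p.2 b).1 h2]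
      exact hab
    · intro h
      exact ⟨f p.1, f p.2, h, hf p.1, hf p.2⟩

end Stmt15Aux

open Finset Stmt15Aux in
/- max_{I∈𝓘_λ} ℓ_{σ,I} = dim F_λ = Σ_{i<j} λ_i λ_j, attained exactly at Imax. -/
theorem stmt_15 (N n : ℕ) (lam : Fin N → ℕ) (hn : ∑ a, lam a = n)
    (σ : Equiv.Perm (Fin n)) :
    IsPart lam (Imax n lam σ) ∧
    ell σ (Imax n lam σ)
      = ∑ p ∈ Finset.univ.filter (fun p : Fin N × Fin N => p.1 < p.2), lam p.1 * lam p.2 ∧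
    (∀ I, IsPart lam I →
      ell σ I ≤ ∑ p ∈ Finset.univ.filter (fun p : Fin N × Fin N => p.1 < p.2),
          lam p.1 * lam p.2 ∧
      (ell σ I = ∑ p ∈ Finset.univ.filter (fun p : Fin N × Fin N => p.1 < p.2),
          lam p.1 * lam p.2 → I = Imax n lam σ)) := by
  have hImax : ∀ a, Imax n lam σ a = (Sset n lam a).image (fun x => σ x) := fun a => rfl
  have hpart : IsPart lam (Imax n lam σ) := by
    refine ⟨?_, ?_, ?_⟩
    · intro a
      rw [hImax a, Finset.card_image_of_injective _ σ.injective, card_Sset lam hn]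
    · intro a b hab
      rw [hImax a, hImax b]
      exact (Finset.disjoint_image σ.injective).2 (disj_Sset lam hab)
    · apply Finset.eq_univ_of_card
      rw [Finset.card_biUnion (fun a _ b _ hab => by
        rw [Function.onFun, hImax a, hImax b]
        exact (Finset.disjoint_image σ.injective).2 (disj_Sset lam hab))]
      rw [Fintype.card_fin]
      have : ∑ u : Fin N, (Imax n lam σ u).card = ∑ a : Fin N, lam a :=
        Finset.sum_congr rfl (fun a _ => by
          rw [hImax a, Finset.card_image_of_injective _ σ.injective, card_Sset lam hn])
      rw [this, hn]
  obtain ⟨fm, hfm_img, hfm_card, hfm_ell⟩ := main_part lam _ hpart σ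
  have hfib : ∀ a, fibr fm a = Sset n lam a := by
    intro a
    exact Finset.image_injective σ.injective ((hfm_img a).symm.trans (hImax a))
  have hanti : Antitone fm := by
    rw [antitone_iff_forall_lt]
    intro i j hij
    by_contra h
    have h' : fm i < fm j := not_le.1 h
    have hi : i ∈ Sset n lam (fm i) := by rw [← hfib]; simp [fibr]
    have hj : j ∈ Sset n lam (fm j) := by rw [← hfib]; simp [fibr]
    have hA := hAB lam h'
    simp only [Sset, mem_filter, mem_univ, true_and] at hi hj
    have hij' : (i : ℕ) < j := hij
    omega
  have hmain : ∀ (f : Fin n → Fin N), (∀ a, (fibr f a).card = lam a) →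
      invc f + coinv f
        = ∑ p ∈ Finset.univ.filter (fun p : Fin N × Fin N => p.1 < p.2),
            lam p.1 * lam p.2 := by
    intro f hf
    rw [split_count, total_count]
    exact Finset.sum_congr rfl (fun q _ => by rw [hf q.1, hf q.2])
  have hco0 : coinv fm = 0 := (coinv_zero_iff fm).2 hanti
  refine ⟨hpart, ?_, ?_⟩
  · rw [hfm_ell, ← hmain fm hfm_card, hco0, add_zero]
  · intro I hI
    obtain ⟨f, hf_img, hf_card, hf_ell⟩ := main_part lam I hI σ
    have hsum := hmain f hf_card
    constructor
    · rw [hf_ell]; omega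
    · intro heq
      rw [hf_ell] at heq
      have hco : coinv f = 0 := by omega
      have hant : Antitone f := (coinv_zero_iff f).1 hco
      have hfe : f = fm :=
        antitone_eq f fm hant hanti (fun a => by rw [hf_card a, hfm_card a])
      funext a
      rw [hf_img a, hfe, ← hfm_img a]
end
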